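/- For all n ∈ ℕ and all 0 ≤ i, j ≤ n, the entries of the matrix U^{-1} (the weight matrix of the U-type network of order n under the inverse weighting) satisfy the closed-form formula U^{-1}[i,j] = (−1)^{i−j} Σ_{α ∈ Q^{SD}_{j,i}} ∏_{s=i}^{j−1} t_{α_{j−s}, s+1} (where the empty sum is 0 and the empty product is 1). -/

import Mathlib

/-!
A `U`-path from height `i` to height `j` is determined by the steps `α q` at which it climbs
to height `j - q` (`q < j - i`). These form a strictly decreasing sequence, and the rise
condition `y k ≥ k`, applied at the step climbing from `j - q - 1` to `j - q`, is exactly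
`α q ≤ j - q - 1`; so the paths correspond to `Q^{SD}_{j,i}`, a path weighing
`∏ q, -t (α q) (j - q)`. Both directions of the bijection are counts,
`y p = i + #{q | α q < p}` and `α q = #{k | y (k + 1) < j - q}`, and both are pinned down by
the single relation `α q < p ↔ j - q ≤ y p`.
-/

/-- The heights of a `U^m_n`-path of order `n` (the abscissas `x i = m + i` are
determined, so only the heights `y i ∈ {0, …, n}`, encoded as `Fin (n+1)`, are recorded):
`y (k+1) ∈ {y k, y k + 1}` and a rise step at position `k` forces `y k ≥ k`. -/
def IsUPath (n : ℕ) (y : Fin (n + 1) → Fin (n + 1)) : Prop :=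
  ∀ k : Fin n,
    ((y k.succ = y k.castSucc ∨ (y k.succ : ℕ) = (y k.castSucc : ℕ) + 1) ∧
      ((y k.succ : ℕ) = (y k.castSucc : ℕ) + 1 → (k : ℕ) ≤ (y k.castSucc : ℕ)))

/-- The inverse weighting of a `U`-type path: a rise step from `(k, j-1)` to
`(k+1, j)` has weight `-t k j` and a horizontal step has weight `1`; the weight of the
path is the product of the weights of its steps. -/
def uinvweight {R : Type*} [CommRing R] (n : ℕ) (t : ℕ → ℕ → R)
    (y : Fin (n + 1) → Fin (n + 1)) : R :=
  ∏ k : Fin n,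
    if (y k.succ : ℕ) = (y k.castSucc : ℕ) + 1
    then -t (k : ℕ) (y k.succ : ℕ) else 1

open scoped Classical in
/-- The matrix `U⁻¹`: its `(i, j)` entry is the sum of the inverse weights of all
`U^0_n`-paths with `y 0 = i` and `y n = j`. -/
noncomputable def UinvMat {R : Type*} [CommRing R] (n : ℕ) (t : ℕ → ℕ → R) :
    Matrix (Fin (n + 1)) (Fin (n + 1)) R :=
  Matrix.of fun i j =>
    ∑ y ∈ Finset.univ.filter
        (fun y : Fin (n + 1) → Fin (n + 1) => IsUPath n y ∧ y 0 = i ∧ y (Fin.last n) = j),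
      uinvweight n t y

open scoped Classical in
/-- `Q^{SD}_{i,j}`: for `i ≥ j`, the strictly decreasing sequences `α₁ > … > α_{i-j}` of
nonnegative integers with `αᵣ ≤ i - r` (here zero-indexed, so `α k ≤ i - (k+1)`; the
values are encoded in `Fin (i+1)`); for `i = j` only the empty sequence, and for `i < j`
the empty set. -/
noncomputable def QSDset (i j : ℕ) : Finset (Fin (i - j) → Fin (i + 1)) :=
  if j ≤ i then
    Finset.univ.filter
      (fun α => StrictAnti α ∧ ∀ r : Fin (i - j), (α r : ℕ) ≤ i - ((r : ℕ) + 1))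
  else ∅

open Finset

section Counting

variable {m : ℕ} {P : Fin m → Prop} [DecidablePred P]

theorem Fin.lt_card_filter_iff_of_antitone (hP : Antitone P) (k : Fin m) :
    P k ↔ (k : ℕ) < #{a | P a} := by
  constructor
  · intro hk
    calc (k : ℕ) < #(Iic k) := by rw [Fin.card_Iic]; omega
      _ ≤ #{a | P a} := card_le_card fun a ha =>
          mem_filter.2 ⟨mem_univ a, hP (mem_Iic.1 ha) hk⟩
  · intro hk
    by_contra hPk
    have : #{a | P a} ≤ #(Iio k) := card_le_card fun a ha =>
      mem_Iio.2 <| lt_of_not_ge fun hka => hPk (hP hka (mem_filter.1 ha).2)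
    rw [Fin.card_Iio] at this
    omega

theorem Fin.le_add_card_filter_iff_of_monotone (hP : Monotone P) (k : Fin m) :
    P k ↔ m ≤ k + #{a | P a} := by
  constructor
  · intro hk
    have : #(Ici k) ≤ #{a | P a} := card_le_card fun a ha =>
      mem_filter.2 ⟨mem_univ a, hP (mem_Ici.1 ha) hk⟩
    rw [Fin.card_Ici] at this
    omega
  · intro hk
    by_contra hPk
    have : #{a | P a} ≤ #(Ioi k) := card_le_card fun a ha =>
      mem_Ioi.2 <| lt_of_not_ge fun hak => hPk (hP hak (mem_filter.1 ha).2)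
    rw [Fin.card_Ioi] at this
    omega

end Counting

namespace IsUPath

variable {n : ℕ} {y : Fin (n + 1) → Fin (n + 1)}

theorem succ_le (hy : IsUPath n y) (k : Fin n) : (y k.succ : ℕ) ≤ y k.castSucc + 1 := by
  rcases (hy k).1 with h | h <;> omega

theorem monotone (hy : IsUPath n y) : Monotone y :=
  Fin.monotone_iff_le_succ.2 fun k => by rcases (hy k).1 with h | h <;> omega

theorem lt_of_step_crosses (hy : IsUPath n y) {k : Fin n} {h : ℕ}
    (hk : (y k.castSucc : ℕ) < h) (hk' : h ≤ y k.succ) : (k : ℕ) < h := by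
  have := hy.succ_le k
  have := (hy k).2 (by omega)
  omega

theorem bounds {i j : Fin (n + 1)} (hy : IsUPath n y) (h0 : y 0 = i) (hl : y (Fin.last n) = j)
    (p : Fin (n + 1)) : i ≤ y p ∧ y p ≤ j :=
  ⟨h0 ▸ hy.monotone (Fin.zero_le p), hl ▸ hy.monotone (Fin.le_last p)⟩

end IsUPath

section Bijection

variable {n : ℕ} {i j : Fin (n + 1)} {α β : Fin ((j : ℕ) - i) → Fin (j + 1)}
  {y z : Fin (n + 1) → Fin (n + 1)}

/-- For a monotone path starting below height `h`, the index of the step that first reaches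
height `h`. -/
def stepToHeight (y : Fin (n + 1) → Fin (n + 1)) (h : ℕ) : ℕ :=
  #{k : Fin n | (y k.succ : ℕ) < h}

theorem stepToHeight_lt_iff (hy : Monotone y) {h : ℕ} (h0 : (y 0 : ℕ) < h) (p : Fin (n + 1)) :
    stepToHeight y h < p ↔ h ≤ y p := by
  have below : Antitone fun k : Fin n => (y k.succ : ℕ) < h := fun a b hab hb =>
    lt_of_le_of_lt (Fin.le_def.1 (hy (Fin.succ_le_succ_iff.2 hab))) hb
  cases p using Fin.cases with
  | zero => simp only [Fin.val_zero, Nat.not_lt_zero, false_iff]; omega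
  | succ k =>
    have := Fin.lt_card_filter_iff_of_antitone below k
    rw [Fin.val_succ, Nat.lt_succ_iff, ← not_lt, ← not_lt, stepToHeight, ← this]

theorem stepToHeight_lt (hy : IsUPath n y) {h : ℕ} (h0 : (y 0 : ℕ) < h)
    (hl : h ≤ y (Fin.last n)) : stepToHeight y h < h := by
  have hlt := stepToHeight_lt_iff hy.monotone h0
  have hn : stepToHeight y h < n := by simpa using (hlt (Fin.last n)).2 hl
  let k : Fin n := ⟨_, hn⟩
  exact hy.lt_of_step_crosses (k := k) (not_le.1 (mt (hlt k.castSucc).2 (by simp [k])))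
    ((hlt k.succ).1 (by simp [k]))

/-- `α q` is the index of the step at which `y` climbs to height `j - q`: this is the
correspondence between `U`-paths from `i` to `j` and `Q^{SD}_{j,i}`. -/
def IsRiseSeq (i j : Fin (n + 1)) (α : Fin ((j : ℕ) - i) → Fin (j + 1))
    (y : Fin (n + 1) → Fin (n + 1)) : Prop :=
  ∀ q (p : Fin (n + 1)), (α q : ℕ) < p ↔ (j : ℕ) - q ≤ y p

namespace IsRiseSeq

theorem eq_iff (hA : IsRiseSeq i j α y) (q : Fin ((j : ℕ) - i)) (k : Fin n) :
    (α q : ℕ) = k ↔ (y k.castSucc : ℕ) < (j : ℕ) - q ∧ (j : ℕ) - q ≤ y k.succ := by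
  have h1 := hA q k.castSucc
  have h2 := hA q k.succ
  simp only [Fin.val_castSucc, Fin.val_succ] at h1 h2
  omega

theorem lt_last (hA : IsRiseSeq i j α y) (hl : y (Fin.last n) = j) (q : Fin ((j : ℕ) - i)) :
    (α q : ℕ) < n := by
  simpa using (hA q (Fin.last n)).2 (by rw [hl]; omega)

theorem strictAnti (hA : IsRiseSeq i j α y) (hy : IsUPath n y) (hl : y (Fin.last n) = j) :
    StrictAnti α := by
  intro q q' hqq'
  let k : Fin n := ⟨α q, hA.lt_last hl q⟩
  have hk := (hA.eq_iff q k).1 rfl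
  have hkv : (k : ℕ) = α q := rfl
  have := hy.succ_le k
  have := hA q' k.castSucc
  simp only [Fin.val_castSucc] at this
  have := q'.isLt
  rw [Fin.lt_def] at hqq' ⊢
  omega

theorem ext_seq (hα : IsRiseSeq i j α y) (hβ : IsRiseSeq i j β y) : α = β := by
  funext q
  apply Fin.ext
  have key : ∀ p : Fin (n + 1), (α q : ℕ) < p ↔ (β q : ℕ) < p :=
    fun p => (hα q p).trans (hβ q p).symm
  rcases lt_trichotomy (α q : ℕ) (β q) with h | h | h
  · exact absurd ((key ⟨β q, by omega⟩).1 h) (lt_irrefl _)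
  · exact h
  · exact absurd ((key ⟨α q, by omega⟩).2 h) (lt_irrefl _)

theorem le_of_isRiseSeq (hy : IsRiseSeq i j α y) (hz : IsRiseSeq i j α z) {p : Fin (n + 1)}
    (hi : i ≤ y p) (hj : z p ≤ j) : z p ≤ y p := by
  by_contra! h
  rw [Fin.lt_def] at h
  rw [Fin.le_def] at hi hj
  have := (hy ⟨j - z p, by omega⟩ p).1 ((hz _ p).2 (by simp only; omega))
  simp only at this
  omega

theorem ext_path (hy : IsRiseSeq i j α y) (hz : IsRiseSeq i j α z)
    (hyr : ∀ p, i ≤ y p ∧ y p ≤ j) (hzr : ∀ p, i ≤ z p ∧ z p ≤ j) : y = z :=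
  funext fun p => le_antisymm (hz.le_of_isRiseSeq hy (hzr p).1 (hyr p).2)
    (hy.le_of_isRiseSeq hz (hyr p).1 (hzr p).2)

theorem isUPath (hA : IsRiseSeq i j α y) (hinj : Function.Injective α)
    (hb : ∀ q, (α q : ℕ) ≤ j - (q + 1)) (hr : ∀ p, i ≤ y p ∧ y p ≤ j) : IsUPath n y := by
  intro k
  have hrk := hr k.castSucc
  have hrk' := hr k.succ
  rw [Fin.le_def, Fin.le_def] at hrk hrk'
  have mono : (y k.castSucc : ℕ) ≤ y k.succ := by
    by_contra! h
    let q : Fin ((j : ℕ) - i) := ⟨j - y k.castSucc, by omega⟩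
    have hbefore := (hA q k.castSucc).2 (by simp only [q]; omega)
    have hafter := (hA q k.succ).1 (by
      simp only [Fin.val_castSucc, Fin.val_succ] at hbefore ⊢
      omega)
    simp only [q] at hafter
    omega
  have unit : (y k.succ : ℕ) ≤ y k.castSucc + 1 := by
    by_contra! h
    have h1 := (hA.eq_iff ⟨j - (y k.castSucc + 1), by omega⟩ k).2 (by simp only; omega)
    have h2 := (hA.eq_iff ⟨j - (y k.castSucc + 2), by omega⟩ k).2 (by simp only; omega)
    have := congrArg Fin.val (hinj (Fin.ext (h1.trans h2.symm)))
    simp only at this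
    omega
  refine ⟨?_, fun hrise => ?_⟩
  · rcases Nat.eq_or_lt_of_le mono with h | h
    · exact Or.inl (Fin.ext h.symm)
    · exact Or.inr (by omega)
  · let q : Fin ((j : ℕ) - i) := ⟨j - y k.succ, by omega⟩
    have hq := (hA.eq_iff q k).2 (by simp only [q]; omega)
    have := hb q
    simp only [q] at hq this
    omega

end IsRiseSeq

/-- The `min` only matters off `U`-paths. -/
def risesOf (i j : Fin (n + 1)) (y : Fin (n + 1) → Fin (n + 1)) :
    Fin ((j : ℕ) - i) → Fin (j + 1) :=
  fun q => ⟨min j (stepToHeight y (j - q)), by omega⟩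

def pathOf (i j : Fin (n + 1)) (α : Fin ((j : ℕ) - i) → Fin (j + 1)) :
    Fin (n + 1) → Fin (n + 1) :=
  fun p => ⟨i + #{q | (α q : ℕ) < p}, by
    have := (card_filter_le univ fun q => (α q : ℕ) < p).trans_eq (card_fin _)
    omega⟩

theorem isRiseSeq_risesOf (hy : IsUPath n y) (h0 : y 0 = i) (hl : y (Fin.last n) = j) :
    IsRiseSeq i j (risesOf i j y) y := by
  subst h0 hl
  intro q p
  have := stepToHeight_lt hy (h := (y (Fin.last n) : ℕ) - q) (by omega) (by omega)
  simp only [risesOf]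
  rw [min_eq_right (by omega)]
  exact stepToHeight_lt_iff hy.monotone (by omega) p

theorem isRiseSeq_pathOf (hij : (i : ℕ) ≤ j) (hα : Antitone α) :
    IsRiseSeq i j α (pathOf i j α) := by
  intro q p
  have below : Monotone fun q => (α q : ℕ) < p := fun a b hab ha =>
    lt_of_le_of_lt (Fin.le_def.1 (hα hab)) ha
  rw [Fin.le_add_card_filter_iff_of_monotone below q]
  simp only [pathOf]
  omega

theorem risesOf_mem (hy : IsUPath n y) (h0 : y 0 = i) (hl : y (Fin.last n) = j) :
    StrictAnti (risesOf i j y) ∧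
      ∀ q : Fin ((j : ℕ) - i), (risesOf i j y q : ℕ) ≤ j - (q + 1) := by
  refine ⟨(isRiseSeq_risesOf hy h0 hl).strictAnti hy hl, fun q => ?_⟩
  subst h0 hl
  have := stepToHeight_lt hy (h := (y (Fin.last n) : ℕ) - q) (by omega) (by omega)
  simp only [risesOf]
  omega

theorem pathOf_mem (hij : (i : ℕ) ≤ j) (hα : StrictAnti α)
    (hb : ∀ q : Fin ((j : ℕ) - i), (α q : ℕ) ≤ j - (q + 1)) :
    IsUPath n (pathOf i j α) ∧ pathOf i j α 0 = i ∧ pathOf i j α (Fin.last n) = j := by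
  have hr : ∀ p, i ≤ pathOf i j α p ∧ pathOf i j α p ≤ j := fun p => by
    have := (card_filter_le univ fun q => (α q : ℕ) < p).trans_eq (card_fin _)
    simp only [pathOf, Fin.le_def]
    omega
  refine ⟨(isRiseSeq_pathOf hij hα.antitone).isUPath hα.injective hb hr, ?_, ?_⟩
  · ext
    simp [pathOf]
  · ext
    have : #{q | (α q : ℕ) < ((Fin.last n : Fin (n + 1)) : ℕ)} = (j : ℕ) - i := by
      rw [filter_true_of_mem fun q _ => by have := hb q; simp only [Fin.val_last]; omega,
        card_univ, Fintype.card_fin]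
    simp only [pathOf, this]
    omega

theorem uinvweight_eq_prod {R : Type*} [CommRing R] (t : ℕ → ℕ → R) (hy : IsUPath n y)
    (h0 : y 0 = i) (hl : y (Fin.last n) = j) (hA : IsRiseSeq i j α y) :
    uinvweight n t y = ∏ q, -t (α q) (j - q) := by
  let e : Fin ((j : ℕ) - i) → Fin n := fun q => ⟨α q, hA.lt_last hl q⟩
  have he : Function.Injective e := fun q q' h =>
    (hA.strictAnti hy hl).injective (Fin.ext (Fin.mk.inj_iff.1 h))
  refine (Fintype.prod_of_injective e he _ _ (fun k hk => if_neg fun hrise => hk ?_)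
    fun q => ?_).symm
  · have := Fin.le_def.1 (hy.bounds h0 hl k.castSucc).1
    have := Fin.le_def.1 (hy.bounds h0 hl k.succ).2
    exact ⟨⟨j - y k.succ, by omega⟩, Fin.ext ((hA.eq_iff _ k).2 (by simp only; omega))⟩
  · have hk := (hA.eq_iff q (e q)).1 rfl
    have := hy.succ_le (e q)
    rw [if_pos (by omega), show (y (e q).succ : ℕ) = j - q by omega]

open scoped Classical in
theorem sum_uinvweight_eq {R : Type*} [CommRing R] (t : ℕ → ℕ → R) (hij : (i : ℕ) ≤ j) :
    ∑ y ∈ univ.filter (fun y : Fin (n + 1) → Fin (n + 1) =>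
        IsUPath n y ∧ y 0 = i ∧ y (Fin.last n) = j), uinvweight n t y =
      ∑ α ∈ QSDset j i, ∏ q, -t (α q) (j - q) := by
  rw [QSDset, if_pos hij]
  refine sum_bij' (fun y _ => risesOf i j y) (fun α _ => pathOf i j α) ?_ ?_ ?_ ?_ ?_ <;>
    simp only [mem_filter, mem_univ, true_and]
  · rintro y ⟨hy, h0, hl⟩
    exact risesOf_mem hy h0 hl
  · rintro α ⟨hα, hb⟩
    exact pathOf_mem hij hα hb
  · rintro y ⟨hy, h0, hl⟩
    obtain ⟨hα, hb⟩ := risesOf_mem hy h0 hl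
    obtain ⟨hy', h0', hl'⟩ := pathOf_mem hij hα hb
    exact (isRiseSeq_pathOf hij hα.antitone).ext_path (isRiseSeq_risesOf hy h0 hl)
      (hy'.bounds h0' hl') (hy.bounds h0 hl)
  · rintro α ⟨hα, hb⟩
    obtain ⟨hy, h0, hl⟩ := pathOf_mem hij hα hb
    exact (isRiseSeq_risesOf hy h0 hl).ext_seq (isRiseSeq_pathOf hij hα.antitone)
  · rintro y ⟨hy, h0, hl⟩
    exact uinvweight_eq_prod t hy h0 hl (isRiseSeq_risesOf hy h0 hl)

end Bijection

/-- The product over `s = i, …, j - 1` is reindexed by `q = j - s - 1`, and the sign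
`(-1)^(i-j) = (-1)^(j-i)` is written with the natural subtraction `j - i`. -/
theorem stmt17 {R : Type*} [CommRing R] (n : ℕ) (t : ℕ → ℕ → R) (i j : Fin (n + 1)) :
    UinvMat n t i j =
      (-1 : R) ^ ((j : ℕ) - (i : ℕ)) *
        ∑ α ∈ QSDset (j : ℕ) (i : ℕ),
          ∏ q : Fin ((j : ℕ) - (i : ℕ)), t (α q : ℕ) ((j : ℕ) - (q : ℕ)) := by
  classical
  rw [UinvMat, Matrix.of_apply]
  by_cases hij : (i : ℕ) ≤ j
  · rw [sum_uinvweight_eq t hij, mul_sum]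
    refine sum_congr rfl fun α _ => ?_
    rw [prod_neg, card_univ, Fintype.card_fin]
  · rw [QSDset, if_neg hij, sum_empty, mul_zero]
    refine sum_eq_zero fun y hy => absurd ?_ hij
    obtain ⟨hy, h0, hl⟩ := (mem_filter.1 hy).2
    exact Fin.le_def.1 (h0 ▸ (hy.bounds h0 hl 0).2)
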